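/- The group algebra (loop algebra) RL of an IP loop L over a commutative ring R is a Hopf quasigroup, with η(1)=e_L, product extended linearly from L, δ(u)=u⊗u, ε(u)=1, and antipode λ(u)=u⁻¹ on basis elements. -/

import Mathlib

open TensorProduct

noncomputable section

/-- A Hopf quasigroup over a commutative ring `R` (Klim–Majid), given by a unital magma
and comonoid structure on `H` whose counit and comultiplication are unital magma morphisms,
together with an antipode satisfying the four Hopf quasigroup identities. -/
structure HopfQuasigroup (R : Type*) [CommRing R] (H : Type*) [AddCommGroup H] [Module R H] :
    Type _ where
  mul : H ⊗[R] H →ₗ[R] H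
  unit : H
  counit : H →ₗ[R] R
  comul : H →ₗ[R] H ⊗[R] H
  antipode : H →ₗ[R] H
  mul_unit_left : ∀ h : H, mul (unit ⊗ₜ[R] h) = h
  mul_unit_right : ∀ h : H, mul (h ⊗ₜ[R] unit) = h
  coassoc : (TensorProduct.assoc R H H H).toLinearMap ∘ₗ comul.rTensor H ∘ₗ comul
      = comul.lTensor H ∘ₗ comul
  counit_left : (TensorProduct.lid R H).toLinearMap ∘ₗ counit.rTensor H ∘ₗ comul = LinearMap.id
  counit_right : (TensorProduct.rid R H).toLinearMap ∘ₗ counit.lTensor H ∘ₗ comul = LinearMap.id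
  counit_unit : counit unit = 1
  counit_mul : counit ∘ₗ mul
      = (TensorProduct.lid R R).toLinearMap ∘ₗ TensorProduct.map counit counit
  comul_unit : comul unit = unit ⊗ₜ[R] unit
  comul_mul : comul ∘ₗ mul = TensorProduct.map mul mul
      ∘ₗ (TensorProduct.tensorTensorTensorComm R H H H H).toLinearMap
      ∘ₗ TensorProduct.map comul comul
  antipode_lH₁ : mul ∘ₗ TensorProduct.map antipode mul
      ∘ₗ (TensorProduct.assoc R H H H).toLinearMap ∘ₗ comul.rTensor H
      = (TensorProduct.lid R H).toLinearMap ∘ₗ counit.rTensor H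
  antipode_lH₂ : mul ∘ₗ mul.lTensor H ∘ₗ (antipode.rTensor H).lTensor H
      ∘ₗ (TensorProduct.assoc R H H H).toLinearMap ∘ₗ comul.rTensor H
      = (TensorProduct.lid R H).toLinearMap ∘ₗ counit.rTensor H
  antipode_rH₁ : mul ∘ₗ mul.rTensor H ∘ₗ (TensorProduct.assoc R H H H).symm.toLinearMap
      ∘ₗ (antipode.rTensor H).lTensor H ∘ₗ comul.lTensor H
      = (TensorProduct.rid R H).toLinearMap ∘ₗ counit.lTensor H
  antipode_rH₂ : mul ∘ₗ TensorProduct.map mul antipode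
      ∘ₗ (TensorProduct.assoc R H H H).symm.toLinearMap ∘ₗ comul.lTensor H
      = (TensorProduct.rid R H).toLinearMap ∘ₗ counit.lTensor H

/-- A loop with the inverse property (IP loop): a unital magma in which every element
has a two-sided inverse satisfying `u⁻¹(uv) = v = (vu)u⁻¹`. -/
structure IPLoop (L : Type*) where
  mul : L → L → L
  e : L
  inv : L → L
  one_mul : ∀ x : L, mul e x = x
  mul_one : ∀ x : L, mul x e = x
  ip_left : ∀ u v : L, mul (inv u) (mul u v) = v
  ip_right : ∀ u v : L, mul (mul v u) (inv u) = v

/-!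
On the basis `L` every Hopf quasigroup axiom becomes an identity in the loop: the bialgebra
axioms hold because `Δ` is grouplike and `ε` is constant, and the four antipode axioms read
`u⁻¹(uv) = v`, `u(u⁻¹v) = v`, `(vu⁻¹)u = v` and `(vu)u⁻¹ = v`. The outer two are the inverse
property; the middle two follow from it because `u⁻¹⁻¹ = u`.
-/

namespace IPLoop

variable {L : Type*} (M : IPLoop L)

theorem mul_inv_cancel (u : L) : M.mul u (M.inv u) = M.e := by
  simpa only [M.one_mul] using M.ip_right u M.e

theorem inv_inv (u : L) : M.inv (M.inv u) = u := by
  simpa only [M.mul_inv_cancel, M.one_mul] using M.ip_right (M.inv u) u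

theorem mul_inv_cancel_left (u v : L) : M.mul u (M.mul (M.inv u) v) = v := by
  simpa only [M.inv_inv] using M.ip_left (M.inv u) v

theorem inv_mul_cancel_right (u v : L) : M.mul (M.mul v (M.inv u)) u = v := by
  simpa only [M.inv_inv] using M.ip_right (M.inv u) v

end IPLoop

section MagmaAlgebra

variable (R : Type*) [CommSemiring R] {L : Type*} (mul : L → L → L)

def Finsupp.magmaMul : (L →₀ R) ⊗[R] (L →₀ R) →ₗ[R] L →₀ R :=
  Finsupp.lmapDomain R R (fun p : L × L => mul p.1 p.2) ∘ₗ
    (finsuppTensorFinsupp' R L L).toLinearMap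

variable {R mul}

@[simp]
theorem Finsupp.magmaMul_single_tmul_single (u v : L) (r s : R) :
    Finsupp.magmaMul R mul (Finsupp.single u r ⊗ₜ Finsupp.single v s)
      = Finsupp.single (mul u v) (r * s) := by
  rw [Finsupp.magmaMul, LinearMap.comp_apply, LinearEquiv.coe_coe,
    finsuppTensorFinsupp'_single_tmul_single, Finsupp.lmapDomain_apply, Finsupp.mapDomain_single]

theorem Finsupp.magmaMul_single_one_tmul {e : L} (he : ∀ x, mul e x = x) (f : L →₀ R) :
    Finsupp.magmaMul R mul (Finsupp.single e 1 ⊗ₜ f) = f := by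
  suffices Finsupp.magmaMul R mul ∘ₗ TensorProduct.mk R _ _ (Finsupp.single e (1 : R))
      = LinearMap.id from LinearMap.congr_fun this f
  ext u
  simp [he]

theorem Finsupp.magmaMul_tmul_single_one {e : L} (he : ∀ x, mul x e = x) (f : L →₀ R) :
    Finsupp.magmaMul R mul (f ⊗ₜ Finsupp.single e 1) = f := by
  suffices Finsupp.magmaMul R mul ∘ₗ (TensorProduct.mk R _ _).flip (Finsupp.single e (1 : R))
      = LinearMap.id from LinearMap.congr_fun this f
  ext u
  simp [he]

end MagmaAlgebra

open Coalgebra in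
-- Mathlib's coalgebra structure on `L →₀ R` is the grouplike one: `Δ u = u ⊗ u`, `ε u = 1`.
def IPLoop.loopAlgebra (R : Type*) [CommRing R] {L : Type*} (M : IPLoop L) :
    HopfQuasigroup R (L →₀ R) where
  mul := Finsupp.magmaMul R M.mul
  unit := Finsupp.single M.e 1
  counit := counit
  comul := comul
  antipode := Finsupp.lmapDomain R R M.inv
  mul_unit_left := Finsupp.magmaMul_single_one_tmul M.one_mul
  mul_unit_right := Finsupp.magmaMul_tmul_single_one M.mul_one
  coassoc := coassoc
  counit_left := by rw [rTensor_counit_comp_comul]; ext; simp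
  counit_right := by rw [lTensor_counit_comp_comul]; ext; simp
  counit_unit := by simp
  counit_mul := by ext; simp
  comul_unit := by simp
  comul_mul := by ext; simp
  antipode_lH₁ := by ext; simp [M.ip_left]
  antipode_lH₂ := by ext; simp [M.mul_inv_cancel_left]
  antipode_rH₁ := by ext; simp [M.inv_mul_cancel_right]
  antipode_rH₂ := by ext; simp [M.ip_right]

theorem ipLoop_loopAlgebra_hopfQuasigroup (R : Type*) [CommRing R] {L : Type*}
    (M : IPLoop L) :
    ∃ hq : HopfQuasigroup R (L →₀ R),
      (∀ u v : L, hq.mul (Finsupp.single u (1 : R) ⊗ₜ[R] Finsupp.single v (1 : R))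
          = Finsupp.single (M.mul u v) (1 : R)) ∧
      hq.unit = Finsupp.single M.e (1 : R) ∧
      (∀ u : L, hq.comul (Finsupp.single u (1 : R))
          = Finsupp.single u (1 : R) ⊗ₜ[R] Finsupp.single u (1 : R)) ∧
      (∀ u : L, hq.counit (Finsupp.single u (1 : R)) = 1) ∧
      (∀ u : L, hq.antipode (Finsupp.single u (1 : R))
          = Finsupp.single (M.inv u) (1 : R)) := by
  refine ⟨M.loopAlgebra R, fun u v => ?_, rfl, fun u => ?_, fun u => ?_, fun u => ?_⟩ <;>
    simp [IPLoop.loopAlgebra]
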